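/- arXiv:math/9803012 — 4 statements merged into one kernel-verified Lean document; each statement's English description precedes it below -/
import Mathlib

section
/- If L_n = 2 X^2 for integers n ≥ 0 and X, then n = 0 or n = 6 (with X = ±1, ±3 respectively). -/
/-- Lucas numbers: `L 0 = 2`, `L 1 = 1`, `L (n+2) = L (n+1) + L n`. -/
def lucas : ℕ → ℤ
  | 0 => 2
  | 1 => 1
  | n + 2 => lucas (n + 1) + lucas n

lemma lucas_add_two (n : ℕ) : lucas (n + 2) = lucas (n + 1) + lucas n := rfl

lemma lucas_pos : ∀ n, 0 < lucas n := by
  intro n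
  induction n using Nat.twoStepInduction with
  | zero => norm_num [lucas]
  | one => norm_num [lucas]
  | more n ih1 ih2 => rw [lucas_add_two]; positivity

/-- Lucas in terms of Fibonacci. -/
lemma lucas_fib : ∀ b a, lucas (a + b + 1) =
    (Nat.fib (b + 1) : ℤ) * lucas (a + 1) + (Nat.fib b : ℤ) * lucas a := by
  intro b
  induction b using Nat.twoStepInduction with
  | zero => intro a; simp
  | one => intro a; rw [show a + 1 + 1 = a + 2 from rfl, lucas_add_two]; simp [Nat.fib]
  | more b ih1 ih2 =>
    intro a
    have h1 := ih1 a
    have h2 := ih2 a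
    rw [show a + (b + 1) + 1 = a + b + 1 + 1 by omega] at h2
    have hrec : lucas (a + b + 1 + 2) = lucas (a + b + 1 + 1) + lucas (a + b + 1) :=
      lucas_add_two _
    have hf : (Nat.fib (b + 2 + 1) : ℤ) = Nat.fib (b + 1 + 1) + Nat.fib (b + 1) := by
      rw [show b + 2 + 1 = b + 1 + 2 by omega, Nat.fib_add_two]; push_cast; ring
    have hf2 : (Nat.fib (b + 2) : ℤ) = Nat.fib (b + 1) + Nat.fib b := by
      rw [Nat.fib_add_two]; push_cast; ring
    rw [show a + (b + 2) + 1 = a + b + 1 + 2 by omega, hrec, h2, h1, hf, hf2]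
    ring

lemma fib_cassini : ∀ b, (Nat.fib (b + 1) : ℤ) ^ 2 - Nat.fib (b + 1) * Nat.fib b
    - (Nat.fib b : ℤ) ^ 2 = (-1) ^ b := by
  intro b
  induction b with
  | zero => simp
  | succ b ih =>
    have hf : (Nat.fib (b + 1 + 1) : ℤ) = Nat.fib b + Nat.fib (b + 1) := by
      rw [show b + 1 + 1 = b + 2 by omega, Nat.fib_add_two]; push_cast; ring
    rw [hf, pow_succ]
    linear_combination -ih

/-- Key identity: `L (j+2k) + (-1)^k L j = L (j+k) * L k`. -/
lemma lucas_key : ∀ j k : ℕ, lucas (j + k + k) + (-1 : ℤ) ^ k * lucas j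
    = lucas (j + k) * lucas k := by
  intro j k
  match k with
  | 0 => simp [lucas]; ring
  | b + 1 =>
    have h3 := lucas_fib b j
    have h2 := lucas_fib b (j + 1)
    rw [show j + 1 + 1 = j + 2 from rfl, lucas_add_two j] at h2
    have h1 := lucas_fib b (j + b + 1)
    rw [show j + b + 1 + 1 = j + 1 + b + 1 by omega, h2, h3] at h1
    have h4 := lucas_fib b 0
    rw [show (0 : ℕ) + b + 1 = b + 1 by omega] at h4
    norm_num [lucas] at h4
    have h5 := fib_cassini b
    rw [show j + (b + 1) + (b + 1) = j + b + 1 + b + 1 by omega, h1,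
      show j + (b + 1) = j + b + 1 by omega, h3, h4, pow_succ]
    linear_combination (lucas j) * h5

/-- Periodicity helper. -/
lemma lucas_period (d : ℤ) (p : ℕ) (h0 : d ∣ lucas p - lucas 0)
    (h1 : d ∣ lucas (p + 1) - lucas 1) : ∀ n, d ∣ lucas (n + p) - lucas n := by
  intro n
  induction n using Nat.twoStepInduction with
  | zero => simpa using h0
  | one => simpa [Nat.add_comm] using h1
  | more n ih1 ih2 =>
    have : lucas (n + 2 + p) - lucas (n + 2)
        = (lucas (n + 1 + p) - lucas (n + 1)) + (lucas (n + p) - lucas n) := by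
      rw [show n + 2 + p = (n + p) + 2 by ring, lucas_add_two, lucas_add_two,
        show n + p + 1 = n + 1 + p by ring]
      ring
    rw [this]
    exact dvd_add ih2 ih1

lemma lucas_period_mul (d : ℤ) (p : ℕ) (h0 : d ∣ lucas p - lucas 0)
    (h1 : d ∣ lucas (p + 1) - lucas 1) : ∀ q r, d ∣ lucas (r + p * q) - lucas r := by
  intro q
  induction q with
  | zero => simp
  | succ q ih =>
    intro r
    have e1 := lucas_period d p h0 h1 (r + p * q)
    have e2 := ih r
    have : lucas (r + p * (q + 1)) - lucas r
        = (lucas (r + p * q + p) - lucas (r + p * q)) + (lucas (r + p * q) - lucas r) := by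
      rw [show r + p * (q + 1) = r + p * q + p by ring]; ring
    rw [this]
    exact dvd_add e1 e2

/-- Jump lemma: for even `m`, `L (a + 2 m j) ≡ (-1)^j L a (mod L m)`. -/
lemma lucas_jump (m : ℕ) (hm : Even m) :
    ∀ j a, lucas m ∣ lucas (a + 2 * m * j) - (-1 : ℤ) ^ j * lucas a := by
  intro j
  induction j with
  | zero => intro a; simp
  | succ j ih =>
    intro a
    have key := lucas_key (a + 2 * m * j) m
    have hsign : (-1 : ℤ) ^ m = 1 := hm.neg_one_pow
    rw [hsign, one_mul] at key
    have h1 : lucas m ∣ lucas (a + 2 * m * j + m + m) + lucas (a + 2 * m * j) := by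
      rw [key]; exact dvd_mul_left _ _
    have h2 := ih a
    have heq : lucas (a + 2 * m * (j + 1)) - (-1 : ℤ) ^ (j + 1) * lucas a
        = (lucas (a + 2 * m * j + m + m) + lucas (a + 2 * m * j))
          - (lucas (a + 2 * m * j) - (-1 : ℤ) ^ j * lucas a) := by
      rw [show a + 2 * m * (j + 1) = a + 2 * m * j + m + m by ring, pow_succ]
      ring
    rw [heq]
    exact dvd_sub h1 h2

lemma lucas_even_jump (m j a : ℕ) (hm : Even m) (hj : Odd j) :
    lucas m ∣ lucas (a + 2 * m * j) + lucas a := by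
  have h := lucas_jump m hm j a
  rw [hj.neg_one_pow] at h
  simpa [sub_neg_eq_add] using h

lemma lucas_mod_reduce (d : ℤ) (p : ℕ) (h0 : d ∣ lucas p - lucas 0)
    (h1 : d ∣ lucas (p + 1) - lucas 1) (n : ℕ) : lucas n % d = lucas (n % p) % d := by
  have h := lucas_period_mul d p h0 h1 (n / p) (n % p)
  rw [Nat.mod_add_div] at h
  exact (Int.modEq_iff_dvd.mpr h).symm

lemma pow2_mod6 : ∀ k, 1 ≤ k → 2 ^ k % 6 = 2 ∨ 2 ^ k % 6 = 4 := by
  intro k hk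
  induction k with
  | zero => omega
  | succ k ih =>
    rcases Nat.eq_zero_or_pos k with rfl | hk'
    · left; rfl
    · have h := ih hk'
      have h2 : 2 ^ (k + 1) = 2 * 2 ^ k := by rw [pow_succ]; ring
      omega

lemma pow2_mod8 : ∀ k, 2 ≤ k → 2 ^ k % 8 = 4 ∨ 2 ^ k % 8 = 0 := by
  intro k hk
  induction k with
  | zero => omega
  | succ k ih =>
    have h2 : 2 ^ (k + 1) = 2 * 2 ^ k := by rw [pow_succ]; ring
    rcases Nat.lt_or_ge k 2 with hk' | hk'
    · have : k = 1 := by omega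
      subst this; left; rfl
    · have h := ih hk'
      omega

/-- The Jacobi symbol contradiction: if `b ≡ 3 (mod 4)` and `gcd c b = 1`,
then `b` cannot divide `x² + c²`. -/
lemma no_sol {b : ℕ} (hb4 : b % 4 = 3) {c x : ℤ} (hc : Int.gcd c b = 1)
    (hdvd : (b : ℤ) ∣ x ^ 2 + c ^ 2) : False := by
  have hb_odd : Odd b := Nat.odd_iff.mpr (by omega)
  have hx : Int.gcd x b = 1 := by
    set g := Int.gcd x b with hg
    have hgx : (g : ℤ) ∣ x := Int.gcd_dvd_left _ _
    have hgb : (g : ℤ) ∣ (b : ℤ) := Int.gcd_dvd_right _ _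
    have hgc2 : (g : ℤ) ∣ c ^ 2 := by
      have h1 : (g : ℤ) ∣ x ^ 2 + c ^ 2 := hgb.trans hdvd
      have h2 : (g : ℤ) ∣ x ^ 2 := dvd_pow hgx two_ne_zero
      simpa using dvd_sub h1 h2
    have hcb2 : Int.gcd (c ^ 2) b = 1 :=
      Int.isCoprime_iff_gcd_eq_one.mp
        ((Int.isCoprime_iff_gcd_eq_one.mpr hc).pow_left)
    have hdg : (g : ℤ) ∣ (Int.gcd (c ^ 2) b : ℤ) := Int.dvd_coe_gcd hgc2 hgb
    rw [hcb2] at hdg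
    exact_mod_cast Int.eq_one_of_dvd_one (by positivity) hdg
  have h1 : jacobiSym (x ^ 2) b = 1 := jacobiSym.sq_one' hx
  have h2 : jacobiSym (x ^ 2) b = jacobiSym (-c ^ 2) b := by
    apply jacobiSym.mod_left'
    have : (b : ℤ) ∣ -c ^ 2 - x ^ 2 := by
      have h' : (-c ^ 2 - x ^ 2 : ℤ) = -(x ^ 2 + c ^ 2) := by ring
      rw [h']
      exact Dvd.dvd.neg_right hdvd
    exact Int.modEq_iff_dvd.mpr this
  have h3 : jacobiSym (-c ^ 2) b = -1 := by
    rw [show (-c ^ 2 : ℤ) = -1 * c ^ 2 by ring, jacobiSym.mul_left,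
      jacobiSym.at_neg_one hb_odd, jacobiSym.sq_one' hc,
      ZMod.χ₄_nat_three_mod_four hb4]
    ring
  omega

lemma odd_dvd_of_dvd_two_mul {L c : ℤ} (hL : L % 2 = 1) (h : L ∣ 2 * c) : L ∣ c := by
  obtain ⟨k, hk⟩ := h
  rcases Int.even_or_odd k with ⟨k', rfl⟩ | hk_odd
  · exact ⟨k', mul_left_cancel₀ two_ne_zero (by linarith)⟩
  · exfalso
    have hLodd : Odd L := Int.odd_iff.mpr hL
    have : Odd (2 * c) := hk ▸ hLodd.mul hk_odd
    rw [Int.odd_iff] at this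
    omega

/-- Common final contradiction. -/
lemma final_contra (m : ℕ) (X c : ℤ) (hmod4 : lucas m % 4 = 3)
    (hgcd : Int.gcd c ((lucas m).toNat) = 1)
    (hdvd : lucas m ∣ 2 * X ^ 2 + 2 * c ^ 2) : False := by
  have hpos := lucas_pos m
  have hodd : lucas m % 2 = 1 := by omega
  have hdvd2 : lucas m ∣ X ^ 2 + c ^ 2 := by
    apply odd_dvd_of_dvd_two_mul hodd
    have : 2 * (X ^ 2 + c ^ 2) = 2 * X ^ 2 + 2 * c ^ 2 := by ring
    rw [this]; exact hdvd
  set b := (lucas m).toNat with hb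
  have hbz : (b : ℤ) = lucas m := Int.toNat_of_nonneg hpos.le
  have hb4 : b % 4 = 3 := by omega
  exact no_sol hb4 hgcd (by rw [hbz]; exact hdvd2)

lemma lucas_mod4_three (m : ℕ) (hm : m % 6 = 2 ∨ m % 6 = 4) : lucas m % 4 = 3 := by
  have h := lucas_mod_reduce 4 6 (by decide) (by decide) m
  rcases hm with hm | hm <;> rw [hm] at h <;> rw [h] <;> decide

lemma lucas_mod3_ne (m : ℕ) (hm : m % 8 = 0 ∨ m % 8 = 4) : lucas m % 3 ≠ 0 := by
  have h := lucas_mod_reduce 3 8 (by decide) (by decide) m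
  rcases hm with hm | hm <;> rw [hm] at h <;> rw [h] <;> decide

lemma gcd_three_lucas (m : ℕ) (h3 : lucas m % 3 ≠ 0) :
    Int.gcd 3 ((lucas m).toNat) = 1 := by
  have hpos := lucas_pos m
  set b := (lucas m).toNat with hb
  have hbz : (b : ℤ) = lucas m := Int.toNat_of_nonneg hpos.le
  have hnd : ¬ (3 ∣ b) := by
    intro hd
    have : (3 : ℤ) ∣ lucas m := by
      rw [← hbz]; exact_mod_cast hd
    omega
  have hcop : Nat.Coprime 3 b := (Nat.Prime.coprime_iff_not_dvd Nat.prime_three).mpr hnd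
  simpa [Int.gcd, Int.natAbs_natCast] using hcop

lemma lucas_zero_eq : lucas 0 = 2 := rfl
lemma lucas_six_eq : lucas 6 = 18 := by decide

theorem lucas_eq_two_mul_sq (n : ℕ) (X : ℤ) (h : lucas n = 2 * X ^ 2) :
    (n = 0 ∧ (X = 1 ∨ X = -1)) ∨ (n = 6 ∧ (X = 3 ∨ X = -3)) := by
  -- Step 1: `n % 12 = 0` or `n % 12 = 6`, by looking mod 8.
  have h8 : lucas n % 8 = 0 ∨ lucas n % 8 = 2 := by
    rcases Int.even_or_odd X with ⟨y, hy⟩ | ⟨y, hy⟩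
    · left
      have hh : lucas n = 8 * y ^ 2 := by rw [h, hy]; ring
      omega
    · right
      have hh : lucas n = 8 * (y ^ 2 + y) + 2 := by rw [h, hy]; ring
      omega
  have hr := lucas_mod_reduce 8 12 (by decide) (by decide) n
  have htab : ∀ r, r < 12 → r ≠ 0 → r ≠ 6 →
      ¬(lucas r % 8 = 0 ∨ lucas r % 8 = 2) := by decide
  have hlt : n % 12 < 12 := Nat.mod_lt _ (by norm_num)
  have hres : n % 12 = 0 ∨ n % 12 = 6 := by
    by_contra hcon
    push_neg at hcon
    exact htab (n % 12) hlt hcon.1 hcon.2 (by omega)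
  rcases hres with hres | hres
  · -- n ≡ 0 (mod 12)
    rcases Nat.eq_zero_or_pos n with rfl | hn
    · left
      refine ⟨rfl, ?_⟩
      have h2 : (2 : ℤ) = 2 * X ^ 2 := lucas_zero_eq ▸ h
      have hx2 : X ^ 2 = 1 := by linarith
      rcases mul_eq_zero.mp (show (X - 1) * (X + 1) = 0 by linear_combination hx2) with h' | h'
      · left; linarith
      · right; linarith
    · exfalso
      set t := n / 12 with ht
      have hnt : n = 12 * t := by omega
      have htpos : t ≠ 0 := by omega
      obtain ⟨e, o, ho, hto⟩ := Nat.exists_eq_pow_mul_and_not_dvd htpos 2 (by norm_num)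
      have hoodd : Odd (3 * o) := Nat.odd_iff.mpr (by omega)
      set m := 2 ^ (e + 1) with hm
      have hm_even : Even m := ⟨2 ^ e, by rw [hm, pow_succ]; ring⟩
      have hneq : n = 0 + 2 * m * (3 * o) := by
        rw [hnt, hto, hm, pow_succ]; ring
      have hdvd := lucas_even_jump m (3 * o) 0 hm_even hoodd
      rw [← hneq] at hdvd
      have hmod4 : lucas m % 4 = 3 := by
        apply lucas_mod4_three
        have := pow2_mod6 (e + 1) (by omega)
        rw [← hm] at this
        exact this
      apply final_contra m X 1 hmod4 Int.one_gcd
      have heq : (2 * X ^ 2 + 2 * 1 ^ 2 : ℤ) = lucas n + lucas 0 := by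
        rw [lucas_zero_eq, ← h]; ring
      rw [heq]; exact hdvd
  · -- n ≡ 6 (mod 12)
    have hsplit : n = 6 ∨ 18 ≤ n := by omega
    rcases hsplit with rfl | hn18
    · right
      refine ⟨rfl, ?_⟩
      have h2 : (18 : ℤ) = 2 * X ^ 2 := lucas_six_eq ▸ h
      have hx2 : X ^ 2 = 9 := by linarith
      rcases mul_eq_zero.mp (show (X - 3) * (X + 3) = 0 by linear_combination hx2) with h' | h'
      · left; linarith
      · right; linarith
    · exfalso
      set t := n / 12 with ht
      have hnt : n = 12 * t + 6 := by omega
      have htpos : t ≠ 0 := by omega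
      obtain ⟨e, o, ho, hto⟩ := Nat.exists_eq_pow_mul_and_not_dvd htpos 2 (by norm_num)
      rcases Nat.eq_zero_or_pos e with rfl | hepos
      · -- t odd: jump from 2m-6
        rw [pow_zero, one_mul] at hto
        have ht1 : t + 1 ≠ 0 := by omega
        obtain ⟨f, o', ho', hto'⟩ := Nat.exists_eq_pow_mul_and_not_dvd ht1 2 (by norm_num)
        have ho'odd : Odd o' := Nat.odd_iff.mpr (by omega)
        have hfpos : 1 ≤ f := by
          by_contra hf
          have hf0 : f = 0 := by omega
          rw [hf0, pow_zero, one_mul] at hto'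
          omega
        set m := 2 ^ (f + 1) with hm
        have hm4 : 4 ≤ m := by
          calc (4 : ℕ) = 2 ^ 2 := rfl
          _ ≤ m := by rw [hm]; exact Nat.pow_le_pow_right (by norm_num) (by omega)
        have hm_even : Even m := ⟨2 ^ f, by rw [hm, pow_succ]; ring⟩
        have hn6 : n + 6 = 2 * m * (3 * o') := by
          have h12 : n + 6 = 12 * (t + 1) := by omega
          rw [h12, hto', hm, pow_succ]; ring
        set s := 3 * o' - 1 with hs
        have ho'pos : 1 ≤ o' := by omega
        have hs1 : s + 1 = 3 * o' := by omega
        have hseven : Even s := by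
          rcases ho'odd with ⟨w, hw⟩
          exact ⟨3 * w + 1, by omega⟩
        set a := 2 * m - 6 with ha
        have han : a + 2 * m * s = n := by
          have h' : 2 * m * (s + 1) = 2 * m + 2 * m * s := by ring
          rw [hs1] at h'
          omega
        have hbase : lucas m ∣ lucas a + lucas 6 := by
          rcases Nat.lt_or_ge m 8 with hm8 | hm8
          · have hm4' : m = 4 := by
              rcases Nat.lt_or_ge f 2 with hf2 | hf2
              · have hf1 : f = 1 := by omega
                rw [hm, hf1]
                norm_num
              · exfalso
                have : (8 : ℕ) = 2 ^ 3 := rfl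
                have h8m : 2 ^ 3 ≤ m := by
                  rw [hm]; exact Nat.pow_le_pow_right (by norm_num) (by omega)
                omega
            rw [show a = 2 by omega, hm4']
            decide
          · obtain ⟨k, hk⟩ : ∃ k, m = k + 6 := ⟨m - 6, by omega⟩
            have hkeven : Even k := by
              rcases hm_even with ⟨w, hw⟩
              exact ⟨w - 3, by omega⟩
            have key := lucas_key 6 k
            rw [hkeven.neg_one_pow, one_mul] at key
            rw [show a = 6 + k + k by omega, show m = 6 + k by omega]
            rw [key]
            exact dvd_mul_right _ _
        have hjump := lucas_jump m hm_even s a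
        rw [hseven.neg_one_pow, one_mul, han] at hjump
        have hdvd : lucas m ∣ lucas n + lucas 6 := by
          have heq2 : lucas n + lucas 6 = (lucas n - lucas a) + (lucas a + lucas 6) := by ring
          rw [heq2]
          exact dvd_add hjump hbase
        have hmod4 : lucas m % 4 = 3 := by
          apply lucas_mod4_three
          have := pow2_mod6 (f + 1) (by omega)
          rw [← hm] at this
          exact this
        have hmod3 : lucas m % 3 ≠ 0 := by
          apply lucas_mod3_ne
          have := pow2_mod8 (f + 1) (by omega)
          rw [← hm] at this
          exact this.symm
        apply final_contra m X 3 hmod4 (gcd_three_lucas m hmod3)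
        have heq : (2 * X ^ 2 + 2 * 3 ^ 2 : ℤ) = lucas n + lucas 6 := by
          rw [lucas_six_eq, ← h]; ring
        rw [heq]; exact hdvd
      · -- t even: jump from 6
        have hoodd : Odd (3 * o) := Nat.odd_iff.mpr (by omega)
        set m := 2 ^ (e + 1) with hm
        have hm_even : Even m := ⟨2 ^ e, by rw [hm, pow_succ]; ring⟩
        have hneq : n = 6 + 2 * m * (3 * o) := by
          rw [hnt, hto, hm, pow_succ]; ring
        have hdvd := lucas_even_jump m (3 * o) 6 hm_even hoodd
        rw [← hneq] at hdvd
        have hmod4 : lucas m % 4 = 3 := by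
          apply lucas_mod4_three
          have := pow2_mod6 (e + 1) (by omega)
          rw [← hm] at this
          exact this
        have hmod3 : lucas m % 3 ≠ 0 := by
          apply lucas_mod3_ne
          have := pow2_mod8 (e + 1) (by omega)
          rw [← hm] at this
          exact this.symm
        apply final_contra m X 3 hmod4 (gcd_three_lucas m hmod3)
        have heq : (2 * X ^ 2 + 2 * 3 ^ 2 : ℤ) = lucas n + lucas 6 := by
          rw [lucas_six_eq, ← h]; ring
        rw [heq]; exact hdvd
end

section
/- If X is an odd integer with X^2 - 1 = 2Y^2 and X^2 - 9 = 10Z^2 for some integers Y, Z, then X ≡ ±2 (mod 5) is forced, hence if additionally X is a norm from Z[(1+√5)/2] (i.e., X = a^2 + ab - b^2 for some integers a, b) there is no solution. -/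
/-!
Reducing `X ^ 2 - 9 = 10 * Z ^ 2` modulo 5 gives `X ^ 2 ≡ 2 ^ 2`, so `X ≡ ±2 (mod 5)`. On the other
hand `a ^ 2 + a * b - b ^ 2 ≡ (a + 3 * b) ^ 2 (mod 5)`, so every norm from `ℤ[(1 + √5)/2]` is a
square modulo 5, whereas `±2` are not, since `5 ≡ 5 (mod 8)`.
-/

namespace Int

theorem modEq_or_modEq_neg_of_sq_modEq_sq {p : ℕ} [Fact p.Prime] {x c : ℤ}
    (h : x ^ 2 ≡ c ^ 2 [ZMOD p]) : x ≡ c [ZMOD p] ∨ x ≡ -c [ZMOD p] := by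
  simp only [← ZMod.intCast_eq_intCast_iff] at h ⊢
  push_cast at h ⊢
  exact sq_eq_sq_iff_eq_or_eq_neg.mp h

theorem not_sq_modEq_two_of_mod_eight_eq_five {p : ℕ} [Fact p.Prime] (hp : p % 8 = 5) (c : ℤ) :
    ¬ c ^ 2 ≡ 2 [ZMOD p] ∧ ¬ c ^ 2 ≡ -2 [ZMOD p] := by
  have hp2 : p ≠ 2 := by rintro rfl; norm_num at hp
  simp only [← ZMod.intCast_eq_intCast_iff]
  push_cast
  constructor
  · intro h
    have := (ZMod.exists_sq_eq_two_iff hp2).mp ⟨c, by rw [← h, sq]⟩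
    omega
  · intro h
    have := (ZMod.exists_sq_eq_neg_two_iff hp2).mp ⟨c, by rw [← h, sq]⟩
    omega

theorem sq_add_mul_sub_sq_modEq_five (a b : ℤ) :
    a ^ 2 + a * b - b ^ 2 ≡ (a + 3 * b) ^ 2 [ZMOD 5] :=
  Int.modEq_iff_dvd.mpr ⟨a * b + 2 * b ^ 2, by ring⟩

end Int

theorem forced_residue_and_no_norm_general (X Z : ℤ)
    (h2 : X ^ 2 - 9 = 10 * Z ^ 2) :
    (X ≡ 2 [ZMOD 5] ∨ X ≡ -2 [ZMOD 5]) ∧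
    ¬ ∃ a b : ℤ, a ^ 2 + a * b - b ^ 2 = X := by
  have : Fact (Nat.Prime 5) := ⟨Nat.prime_five⟩
  have hsq : X ^ 2 ≡ 2 ^ 2 [ZMOD 5] := Int.modEq_iff_dvd.mpr ⟨-(2 * Z ^ 2 + 1), by linarith⟩
  have hX5 := Int.modEq_or_modEq_neg_of_sq_modEq_sq (p := 5) hsq
  refine ⟨hX5, ?_⟩
  rintro ⟨a, b, rfl⟩
  have hnorm := (Int.sq_add_mul_sub_sq_modEq_five a b).symm
  obtain ⟨not_two, not_neg_two⟩ :=
    Int.not_sq_modEq_two_of_mod_eight_eq_five (p := 5) rfl (a + 3 * b)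
  rcases hX5 with h | h
  exacts [not_two (hnorm.trans h), not_neg_two (hnorm.trans h)]

theorem forced_residue_and_no_norm (X Y Z : ℤ) (hX : Odd X)
    (h1 : X ^ 2 - 1 = 2 * Y ^ 2) (h2 : X ^ 2 - 9 = 10 * Z ^ 2) :
    (X ≡ 2 [ZMOD 5] ∨ X ≡ -2 [ZMOD 5]) ∧
    ¬ ∃ a b : ℤ, a ^ 2 + a * b - b ^ 2 = X :=
  forced_residue_and_no_norm_general X Z h2
end

section
/- If x, u, v lie in the ring of integers of Q(√5) with u, v units, a ≥ 2, and x^2 = 2^a u + v, then v is the square of a unit. -/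
open Polynomial

/-- The ring of integers `ℤ[ε]` of `ℚ(√5)`, with `ε = (1+√5)/2` a root of `X² - X - 1`. -/
noncomputable abbrev GoldRing : Type := AdjoinRoot (X ^ 2 - X - 1 : ℤ[X])

open Real goldenRatio

noncomputable def gr : GoldRing := AdjoinRoot.root _

lemma gr_sq : gr ^ 2 = gr + 1 := by
  have h := AdjoinRoot.eval₂_root (X ^ 2 - X - 1 : ℤ[X])
  simp [eval₂_sub, eval₂_pow, sub_eq_zero] at h
  rw [gr]
  linear_combination h

lemma exists_rep (z : GoldRing) : ∃ a b : ℤ, z = (a : GoldRing) + b * gr := by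
  have htop := AdjoinRoot.adjoinRoot_eq_top (f := (X ^ 2 - X - 1 : ℤ[X]))
  have hz : z ∈ Algebra.adjoin ℤ ({AdjoinRoot.root _} : Set GoldRing) := htop ▸ Algebra.mem_top
  induction hz using Algebra.adjoin_induction with
  | mem x hx =>
    rw [Set.mem_singleton_iff] at hx
    exact ⟨0, 1, by simp [hx, gr]⟩
  | algebraMap r => exact ⟨r, 0, by simp [algebraMap_int_eq, map_intCast]⟩
  | add x y _ _ hx hy =>
    obtain ⟨a, b, rfl⟩ := hx; obtain ⟨c, d, rfl⟩ := hy
    exact ⟨a + c, b + d, by push_cast; ring⟩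
  | mul x y _ _ hx hy =>
    obtain ⟨a, b, rfl⟩ := hx; obtain ⟨c, d, rfl⟩ := hy
    exact ⟨a * c + b * d, a * d + b * c + b * d, by push_cast; linear_combination (b*d : GoldRing) * gr_sq⟩

noncomputable def emb : GoldRing →+* ℝ :=
  AdjoinRoot.lift (Int.castRingHom ℝ) goldenRatio (by
    simp [eval₂_sub, eval₂_pow, sub_eq_zero])

lemma emb_gr : emb gr = goldenRatio := AdjoinRoot.lift_root _

lemma rep_unique (a b c d : ℤ) (h : (a : GoldRing) + b * gr = (c : GoldRing) + d * gr) :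
    a = c ∧ b = d := by
  have h2 := congrArg emb h
  simp only [map_add, map_mul, map_intCast, emb_gr] at h2
  by_cases hbd : b = d
  · subst hbd
    have : (a : ℝ) = c := by linarith [h2]
    exact ⟨by exact_mod_cast this, rfl⟩
  · exfalso
    have hne : ((d : ℝ) - b) ≠ 0 := by
      intro hc
      apply hbd
      have : (b : ℝ) = d := by linarith
      exact_mod_cast this
    have hgold : goldenRatio = ((a : ℝ) - c) / ((d : ℝ) - b) := by
      rw [eq_div_iff hne]
      linear_combination -h2
    have : ¬ Irrational goldenRatio := by
      rw [hgold]
      rw [show ((a:ℝ) - c) / ((d:ℝ) - b) = ((((a - c : ℤ) : ℚ) / ((d - b : ℤ) : ℚ) : ℚ) : ℝ) by push_cast; ring]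
      exact Rat.not_irrational _
    exact this goldenRatio_irrational


lemma no3 : ∀ P Q : ZMod 4, 3 ≠ P^2 + Q^2 := by decide
lemma pair01 : ∀ P Q : ZMod 4, ¬(0 = P^2 + Q^2 ∧ 1 = 2*P*Q + Q^2) := by decide
lemma pair03 : ∀ P Q : ZMod 4, ¬(0 = P^2 + Q^2 ∧ 3 = 2*P*Q + Q^2) := by decide
lemma pair13 : ∀ P Q : ZMod 4, ¬(1 = P^2 + Q^2 ∧ 3 = 2*P*Q + Q^2) := by decide

lemma cast_mod4 (A r : ℤ) (h : A % 4 = r) : (A : ZMod 4) = (r : ZMod 4) := by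
  have : A ≡ r [ZMOD 4] := by unfold Int.ModEq; omega
  exact (ZMod.intCast_eq_intCast_iff _ _ _).mpr this

lemma bad_mod4 (p q t1 t2 A B : ℤ) (h1 : A = p^2 + q^2 + 4*t1) (h2 : B = 2*p*q + q^2 + 4*t2)
    (hA : A % 4 = 3 ∨ (A % 4 = 0 ∧ B % 4 = 1) ∨ (A % 4 = 0 ∧ B % 4 = 3) ∨ (A % 4 = 1 ∧ B % 4 = 3)) :
    False := by
  have c1 : (A : ZMod 4) = (p : ZMod 4)^2 + (q : ZMod 4)^2 := by
    have := congrArg (fun z : ℤ => (z : ZMod 4)) h1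
    push_cast at this
    rw [this]; ring_nf
    rw [show (4 : ZMod 4) = 0 by decide]; ring
  have c2 : (B : ZMod 4) = 2*(p : ZMod 4)*(q : ZMod 4) + (q : ZMod 4)^2 := by
    have := congrArg (fun z : ℤ => (z : ZMod 4)) h2
    push_cast at this
    rw [this]; ring_nf
    rw [show (4 : ZMod 4) = 0 by decide]; ring
  rcases hA with hA | ⟨hA, hB⟩ | ⟨hA, hB⟩ | ⟨hA, hB⟩
  · have := cast_mod4 A 3 hA; rw [c1] at this; norm_num at this
    exact no3 _ _ this.symm
  · have hA' := cast_mod4 A 0 hA; have hB' := cast_mod4 B 1 hB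
    rw [c1] at hA'; rw [c2] at hB'; norm_num at hA' hB'
    exact pair01 _ _ ⟨hA'.symm, hB'.symm⟩
  · have hA' := cast_mod4 A 0 hA; have hB' := cast_mod4 B 3 hB
    rw [c1] at hA'; rw [c2] at hB'; norm_num at hA' hB'
    exact pair03 _ _ ⟨hA'.symm, hB'.symm⟩
  · have hA' := cast_mod4 A 1 hA; have hB' := cast_mod4 B 3 hB
    rw [c1] at hA'; rw [c2] at hB'; norm_num at hA' hB'
    exact pair13 _ _ ⟨hA'.symm, hB'.symm⟩

set_option maxHeartbeats 1000000 in
lemma descent : ∀ n : ℕ, ∀ a b p q t1 t2 : ℤ,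
    a.natAbs + b.natAbs ≤ n →
    (a^2 + a*b - b^2 = 1 ∨ a^2 + a*b - b^2 = -1) →
    a = p^2 + q^2 + 4*t1 → b = 2*p*q + q^2 + 4*t2 →
    ∃ c d : ℤ, (c^2 + c*d - d^2 = 1 ∨ c^2 + c*d - d^2 = -1) ∧ a = c^2 + d^2 ∧ b = 2*c*d + d^2 := by
  intro n
  induction n using Nat.strong_induction_on with
  | _ n IH =>
  intro a b p q t1 t2 hn hN h1 h2
  by_cases hsmall : a.natAbs + b.natAbs ≤ 2
  · have ha1 : -2 ≤ a := by omega
    have ha2 : a ≤ 2 := by omega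
    have hb1 : -2 ≤ b := by omega
    have hb2 : b ≤ 2 := by omega
    interval_cases a <;> interval_cases b <;> first
      | omega
      | (revert hN; decide)
      | ((refine ⟨1, 0, ?_, ?_, ?_⟩ <;> norm_num); done)
      | ((refine ⟨0, 1, ?_, ?_, ?_⟩ <;> norm_num); done)
      | (refine (bad_mod4 p q t1 t2 _ _ h1 h2 ?_).elim; omega)
  · -- descent step
    have hm : 3 ≤ a.natAbs + b.natAbs := by omega
    have ha0 : a ≠ 0 := by
      rintro rfl
      have hb : 3 ≤ b.natAbs := by omega
      have : 3 ≤ b ∨ b ≤ -3 := by omega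
      rcases hN with hN | hN <;> rcases this with h | h <;> nlinarith
    have hb0 : b ≠ 0 := by
      rintro rfl
      have : 3 ≤ a ∨ a ≤ -3 := by omega
      rcases hN with hN | hN <;> rcases this with h | h <;> nlinarith
    by_cases hs : 0 < a * b
    · -- same sign: multiply by ε⁻²; v' = (2a-b, b-a)
      have hsign : (0 < a ∧ 0 < b) ∨ (a < 0 ∧ b < 0) := by
        rcases lt_trichotomy a 0 with h | h | h <;> rcases lt_trichotomy b 0 with h' | h' | h' <;>
          first | (left; exact ⟨by omega, by omega⟩) | (right; exact ⟨h, h'⟩) | nlinarith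
      have key : (0 ≤ 2*a - b ∧ 0 ≤ b - a) ∨ (2*a - b ≤ 0 ∧ b - a ≤ 0) := by
        rcases hsign with ⟨h, h'⟩ | ⟨h, h'⟩
        · left
          constructor
          · by_contra hc; push_neg at hc
            rcases hN with hN | hN <;> nlinarith
          · by_contra hc; push_neg at hc
            rcases hN with hN | hN <;> nlinarith
        · right
          constructor
          · by_contra hc; push_neg at hc
            rcases hN with hN | hN <;> nlinarith
          · by_contra hc; push_neg at hc
            rcases hN with hN | hN <;> nlinarith
      have hlt : (2*a - b).natAbs + (b - a).natAbs < a.natAbs + b.natAbs := by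
        rcases hsign with ⟨h, h'⟩ | ⟨h, h'⟩ <;> rcases key with ⟨k1, k2⟩ | ⟨k1, k2⟩ <;> omega
      have hN' : (2*a-b)^2 + (2*a-b)*(b-a) - (b-a)^2 = 1 ∨ (2*a-b)^2 + (2*a-b)*(b-a) - (b-a)^2 = -1 := by
        rcases hN with hN | hN
        · left; linear_combination hN
        · right; linear_combination hN
      obtain ⟨c, d, hcd, e1, e2⟩ := IH ((2*a-b).natAbs + (b-a).natAbs) (by omega)
        (2*a-b) (b-a) (q-p) p (2*t1-t2) (t2-t1) le_rfl hN'
        (by linear_combination 2*h1 - h2) (by linear_combination h2 - h1)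
      refine ⟨d, c + d, ?_, by linear_combination e1 + e2, by linear_combination e1 + 2*e2⟩
      rcases hcd with hcd | hcd
      · right; linear_combination -hcd
      · left; linear_combination -hcd
    · -- opposite signs: multiply by ε²; v' = (a+b, a+2b)
      have hsign : (0 < a ∧ b < 0) ∨ (a < 0 ∧ 0 < b) := by
        rcases lt_trichotomy a 0 with h | h | h <;> rcases lt_trichotomy b 0 with h' | h' | h' <;>
          first | (left; exact ⟨h, h'⟩) | (right; exact ⟨h, h'⟩) | (exfalso; apply hs; positivity) | omega | (exfalso; exact hs (by nlinarith))
      have key : (0 ≤ a + b ∧ a + 2*b ≤ 0) ∨ (a + b ≤ 0 ∧ 0 ≤ a + 2*b) := by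
        rcases hsign with ⟨h, h'⟩ | ⟨h, h'⟩
        · left
          constructor
          · by_contra hc; push_neg at hc
            rcases hN with hN | hN <;> nlinarith
          · by_contra hc; push_neg at hc
            rcases hN with hN | hN <;> nlinarith
        · right
          constructor
          · by_contra hc; push_neg at hc
            rcases hN with hN | hN <;> nlinarith
          · by_contra hc; push_neg at hc
            rcases hN with hN | hN <;> nlinarith
      have hlt : (a + b).natAbs + (a + 2*b).natAbs < a.natAbs + b.natAbs := by
        rcases hsign with ⟨h, h'⟩ | ⟨h, h'⟩ <;> rcases key with ⟨k1, k2⟩ | ⟨k1, k2⟩ <;> omega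
      have hN' : (a+b)^2 + (a+b)*(a+2*b) - (a+2*b)^2 = 1 ∨ (a+b)^2 + (a+b)*(a+2*b) - (a+2*b)^2 = -1 := by
        rcases hN with hN | hN
        · left; linear_combination hN
        · right; linear_combination hN
      obtain ⟨c, d, hcd, e1, e2⟩ := IH ((a+b).natAbs + (a+2*b).natAbs) (by omega)
        (a+b) (a+2*b) q (p+q) (t1+t2) (t1+2*t2) le_rfl hN'
        (by linear_combination h1 + h2) (by linear_combination h1 + 2*h2)
      refine ⟨d - c, c, ?_, by linear_combination 2*e1 - e2, by linear_combination e2 - e1⟩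
      rcases hcd with hcd | hcd
      · right; linear_combination -hcd
      · left; linear_combination -hcd

/-- If `x² = 2^a u + v` with `a ≥ 2` and `u, v` units of `ℤ[ε]`, then `v` is the
square of a unit. -/
theorem v_is_square_of_unit (a : ℕ) (x u v : GoldRing)
    (ha : 2 ≤ a) (hu : IsUnit u) (hv : IsUnit v) (h : x ^ 2 = 2 ^ a * u + v) :
    ∃ w : GoldRing, IsUnit w ∧ v = w ^ 2 := by
  have h4 : (2 : GoldRing) ^ a = 4 * 2 ^ (a - 2) := by
    rw [show a = 2 + (a - 2) by omega, pow_add]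
    norm_num
  rw [h4] at h
  have hveq : v = x ^ 2 + 4 * (-(2 ^ (a - 2) * u)) := by linear_combination -h
  obtain ⟨A, B, hvrep⟩ := exists_rep v
  obtain ⟨p, q, hxrep⟩ := exists_rep x
  obtain ⟨t1, t2, htrep⟩ := exists_rep (-(2 ^ (a - 2) * u))
  have key : (A : GoldRing) + B * gr
      = ((p^2 + q^2 + 4*t1 : ℤ) : GoldRing) + ((2*p*q + q^2 + 4*t2 : ℤ) : GoldRing) * gr := by
    rw [← hvrep, hveq, hxrep, htrep]
    push_cast
    linear_combination (q^2 : GoldRing) * gr_sq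
  obtain ⟨e1, e2⟩ := rep_unique _ _ _ _ key
  -- norm of v is ±1
  obtain ⟨vi, hvv⟩ := hv.exists_right_inv
  obtain ⟨c0, d0, hinv⟩ := exists_rep vi
  have key2 : ((A*c0 + B*d0 : ℤ) : GoldRing) + ((A*d0 + B*c0 + B*d0 : ℤ) : GoldRing) * gr
      = ((1 : ℤ) : GoldRing) + ((0 : ℤ) : GoldRing) * gr := by
    push_cast
    rw [hvrep, hinv] at hvv
    linear_combination hvv - (B*d0 : GoldRing) * gr_sq
  obtain ⟨f1, f2⟩ := rep_unique _ _ _ _ key2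
  have hNv : (A^2 + A*B - B^2) * (c0^2 + c0*d0 - d0^2) = 1 := by
    have hid : (A^2 + A*B - B^2) * (c0^2 + c0*d0 - d0^2)
        = (A*c0 + B*d0)^2 + (A*c0 + B*d0)*(A*d0 + B*c0 + B*d0) - (A*d0 + B*c0 + B*d0)^2 := by
      ring
    rw [hid, f1, f2]; ring
  have hN : A^2 + A*B - B^2 = 1 ∨ A^2 + A*B - B^2 = -1 := by
    have := IsUnit.of_mul_eq_one _ hNv
    exact Int.isUnit_iff.mp this
  obtain ⟨c, d, hcd, ea, eb⟩ := descent (A.natAbs + B.natAbs) A B p q t1 t2 le_rfl hN e1 e2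
  refine ⟨(c : GoldRing) + d * gr, ?_, ?_⟩
  · rcases hcd with hcd | hcd
    · apply IsUnit.of_mul_eq_one (((c + d : ℤ) : GoldRing) - (d : ℤ) * gr)
      have : ((c^2 + c*d - d^2 : ℤ) : GoldRing) = 1 := by rw [hcd]; norm_num
      rw [← this]
      push_cast
      linear_combination (-(d^2) : GoldRing) * gr_sq
    · apply IsUnit.of_mul_eq_one (-(((c + d : ℤ) : GoldRing) - (d : ℤ) * gr))
      have : ((-(c^2 + c*d - d^2) : ℤ) : GoldRing) = 1 := by rw [hcd]; norm_num
      rw [← this]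
      push_cast
      linear_combination ((d^2) : GoldRing) * gr_sq
  · rw [hvrep, ea, eb]
    push_cast
    linear_combination (-(d^2) : GoldRing) * gr_sq
end

section
/- If x is in the ring of integers of Q(√5) with x^2 - 1 = 2^a u for a unit u and a ≥ 2, then (after replacing x by -x if necessary) x + 1 = 2^{a-1} u_1 and x - 1 = 2 u_2 for some units u_1, u_2 with u = u_1 u_2. -/
/-!
Since `2` is prime in `ℤ[ε]` (the reduction of `X² - X - 1` mod 2 is irreducible, so the quotient
by `2` is `𝔽₄`) and `(x + 1) - (x - 1) = 2`, both factors of `(x - 1)(x + 1) = 2^a u` are even.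
Writing `x - 1 = 2w`, the halves `w` and `w + 1` cannot both be even; the sign of `x` is chosen so
that `w` is odd. Then `w (w + 1) = 2^(a-2) u` forces `2^(a-2) ∣ w + 1`, and what is left over are
units.
-/

open Polynomial

theorem Prime.exists_isUnit_of_mul_eq_pow_mul {M : Type*} [CommMonoidWithZero M]
    [IsCancelMulZero M] {p w z u : M} {n : ℕ} (hp : Prime p) (hw : ¬ p ∣ w) (hu : IsUnit u)
    (h : w * z = p ^ n * u) : ∃ v, IsUnit v ∧ IsUnit w ∧ z = p ^ n * v ∧ u = v * w := by
  obtain ⟨v, rfl⟩ := hp.pow_dvd_of_dvd_mul_left n hw ⟨u, h⟩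
  have huv : u = v * w :=
    mul_left_cancel₀ (pow_ne_zero n hp.ne_zero) (by rw [← h]; ac_rfl)
  obtain ⟨hv, hw⟩ := IsUnit.mul_iff.1 (huv ▸ hu)
  exact ⟨v, hv, hw, rfl, huv⟩

section Halving

variable {R : Type*} [CommRing R]

theorem two_dvd_sub_one_of_two_dvd_sq_sub_one {x : R} (hp : Prime (2 : R))
    (h : 2 ∣ x ^ 2 - 1) : 2 ∣ x - 1 := by
  have hx : x ^ 2 - 1 = (x - 1) * (x - 1 + 2) := by ring
  rw [hx] at h
  rcases hp.dvd_or_dvd h with h | h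
  · exact h
  · exact (dvd_add_left (dvd_refl 2)).1 h

theorem exists_eq_or_eq_neg_sub_one_eq_two_mul_not_dvd {x : R} (h2 : ¬ IsUnit (2 : R))
    (hx : 2 ∣ x - 1) : ∃ y, (y = x ∨ y = -x) ∧ ∃ w, y - 1 = 2 * w ∧ ¬ 2 ∣ w := by
  obtain ⟨t, ht⟩ := hx
  by_cases ht2 : 2 ∣ t
  · refine ⟨-x, Or.inr rfl, -(t + 1), by linear_combination -ht, fun h => h2 ?_⟩
    exact isUnit_of_dvd_one (by simpa using dvd_add ht2 h)
  · exact ⟨x, Or.inl rfl, t, ht, ht2⟩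

theorem exists_isUnit_of_sq_sub_one_eq_two_pow_mul [IsDomain R] {a : ℕ} {y u w : R}
    (hp : Prime (2 : R)) (ha : 2 ≤ a) (hu : IsUnit u) (h : y ^ 2 - 1 = 2 ^ a * u)
    (hw : y - 1 = 2 * w) (hw2 : ¬ 2 ∣ w) :
    ∃ u₁ u₂ : R, IsUnit u₁ ∧ IsUnit u₂ ∧
      y + 1 = 2 ^ (a - 1) * u₁ ∧ y - 1 = 2 * u₂ ∧ u = u₁ * u₂ := by
  obtain ⟨n, rfl⟩ := Nat.exists_eq_add_of_le ha
  have hww : w * (w + 1) = 2 ^ n * u :=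
    mul_left_cancel₀ (pow_ne_zero 2 hp.ne_zero) (by linear_combination h - (y + 1 + 2 * w) * hw)
  obtain ⟨v, hv, hwu, hwv, huv⟩ := hp.exists_isUnit_of_mul_eq_pow_mul hw2 hu hww
  refine ⟨v, w, hv, hwu, ?_, hw, huv⟩
  rw [show 2 + n - 1 = n + 1 by omega]
  linear_combination hw + 2 * hwv

end Halving

theorem AdjoinRoot.isPrime_map_of_prime_map {R : Type*} [CommRing R] {f : R[X]} {I : Ideal R}
    (hf : Prime (f.map (Ideal.Quotient.mk I))) : (I.map (AdjoinRoot.of f)).IsPrime := by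
  have := (Ideal.span_singleton_prime hf.ne_zero).2 hf
  rw [← Ideal.Quotient.isDomain_iff_prime] at this ⊢
  exact (AdjoinRoot.quotEquivQuotMap f I).toMulEquiv.isDomain_iff.2 this

theorem AdjoinRoot.prime_natCast_of_irreducible_map {f : ℤ[X]} {p : ℕ} [Fact p.Prime]
    (hf : Irreducible (f.map (Int.castRingHom (ZMod p)))) : Prime (p : AdjoinRoot f) := by
  have hdeg : f.degree ≠ 0 := fun h =>
    hf.natDegree_pos.ne' (natDegree_eq_zero_iff_degree_le_zero.2 (h ▸ degree_map_le))
  have hp : (p : AdjoinRoot f) ≠ 0 := by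
    rw [← map_natCast (AdjoinRoot.of f)]
    exact (map_ne_zero_iff _ (AdjoinRoot.of.injective_of_degree_ne_zero hdeg)).2
      (Nat.cast_ne_zero.2 (Fact.out : p.Prime).ne_zero)
  rw [← Ideal.span_singleton_prime hp, ← map_natCast (AdjoinRoot.of f), ← Set.image_singleton,
    ← Ideal.map_span]
  apply AdjoinRoot.isPrime_map_of_prime_map
  let e := (Int.quotientSpanNatEquivZMod p).symm
  have he : f.map (Ideal.Quotient.mk _) = (f.map (Int.castRingHom (ZMod p))).map e.toRingHom := by
    rw [Polynomial.map_map]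
    congr 1
    exact RingHom.ext_int _ _
  rw [he]
  exact (MulEquiv.prime_iff (mapEquiv e)).2 hf.prime

namespace GoldRing

theorem irreducible_map_castRingHom_two :
    Irreducible ((X ^ 2 - X - 1 : ℤ[X]).map (Int.castRingHom (ZMod 2))) := by
  simp only [Polynomial.map_sub, Polynomial.map_pow, map_X, Polynomial.map_one]
  refine irreducible_of_degree_le_three_of_not_isRoot ?_ ?_
  · rw [show (X ^ 2 - X - 1 : (ZMod 2)[X]).natDegree = 2 by compute_degree!]
    decide
  · simp only [IsRoot.def, eval_sub, eval_pow, eval_X, eval_one]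
    decide

instance : IsDomain GoldRing := by
  have hmonic : (X ^ 2 - X - 1 : ℤ[X]).Monic := by monicity!
  exact AdjoinRoot.isDomain_of_prime
    (hmonic.irreducible_of_irreducible_map _ _ irreducible_map_castRingHom_two).prime

theorem prime_two : Prime (2 : GoldRing) := by
  exact_mod_cast AdjoinRoot.prime_natCast_of_irreducible_map irreducible_map_castRingHom_two

end GoldRing

/-- If `x² - 1 = 2^a u` with `u` a unit of `ℤ[ε]` and `a ≥ 2`, then, after replacing
`x` by `-x` if necessary, `x + 1 = 2^(a-1) u₁` and `x - 1 = 2 u₂` for units `u₁, u₂`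
with `u = u₁ u₂`. -/
theorem factorization_of_sq_sub_one (a : ℕ) (x u : GoldRing)
    (ha : 2 ≤ a) (hu : IsUnit u) (h : x ^ 2 - 1 = 2 ^ a * u) :
    ∃ y : GoldRing, (y = x ∨ y = -x) ∧
      ∃ u₁ u₂ : GoldRing, IsUnit u₁ ∧ IsUnit u₂ ∧
        y + 1 = 2 ^ (a - 1) * u₁ ∧ y - 1 = 2 * u₂ ∧ u = u₁ * u₂ := by
  have hp := GoldRing.prime_two
  have hx : 2 ∣ x - 1 := two_dvd_sub_one_of_two_dvd_sq_sub_one hp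
    (h ▸ (dvd_pow_self 2 (by omega)).mul_right u)
  obtain ⟨y, hyx, w, hw, hw2⟩ := exists_eq_or_eq_neg_sub_one_eq_two_mul_not_dvd hp.not_isUnit hx
  have hy : y ^ 2 - 1 = 2 ^ a * u := by rcases hyx with rfl | rfl <;> linear_combination h
  exact ⟨y, hyx, exists_isUnit_of_sq_sub_one_eq_two_pow_mul hp ha hu hy hw hw2⟩
end
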